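/- Let r ∈ ℂ denote the positive real square root of 7. The binary sextic z1^6 + 18·z1^5·z2 + 40·(1 − 2r)·z1^3·z2^3 + 32·(115 − 41r)·z2^6 is linearly equivalent to the binary sextic 184z1^6 − 192z1^5z2 − 300z1^4z2^2 − 320z1^3z2^3 − 150z1^2z2^4 − 48z1z2^5 + 23z2^6. -/

import Mathlib

open MvPolynomial

/-- The polynomial obtained from `Q(z)` by the linear change of variables `z ↦ C z`;
its value at `w` is `Q (C w)`. -/
noncomputable def substMat (M : Matrix (Fin 2) (Fin 2) ℂ) (Q : MvPolynomial (Fin 2) ℂ) :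
    MvPolynomial (Fin 2) ℂ :=
  aeval (fun i => MvPolynomial.C (M i 0) * X 0 + MvPolynomial.C (M i 1) * X 1) Q

/-- Two binary forms are linearly equivalent if one is obtained from the other by an
invertible linear change of the variables. -/
def LinEquiv (Q R : MvPolynomial (Fin 2) ℂ) : Prop :=
  ∃ M : Matrix (Fin 2) (Fin 2) ℂ, IsUnit M.det ∧ substMat M Q = R

set_option maxRecDepth 100000 in
set_option maxHeartbeats 4000000 in
/-- With `r` the positive real square root of `7`, the binary sextic
`z1^6 + 18 z1^5 z2 + 40 (1 − 2r) z1^3 z2^3 + 32 (115 − 41r) z2^6` is linearly equivalent to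
`184 z1^6 − 192 z1^5 z2 − 300 z1^4 z2^2 − 320 z1^3 z2^3 − 150 z1^2 z2^4 − 48 z1 z2^5
  + 23 z2^6`. -/
theorem exceptional_sextic_vii_equiv :
    LinEquiv
      (X 0 ^ 6 + 18 * X 0 ^ 5 * X 1
        + MvPolynomial.C (40 * (1 - 2 * (Real.sqrt 7 : ℂ))) * X 0 ^ 3 * X 1 ^ 3
        + MvPolynomial.C (32 * (115 - 41 * (Real.sqrt 7 : ℂ))) * X 1 ^ 6)
      (184 * X 0 ^ 6 - 192 * X 0 ^ 5 * X 1 - 300 * X 0 ^ 4 * X 1 ^ 2 - 320 * X 0 ^ 3 * X 1 ^ 3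
        - 150 * X 0 ^ 2 * X 1 ^ 4 - 48 * X 0 * X 1 ^ 5 + 23 * X 1 ^ 6) := by
  have h7 : ((Real.sqrt 7 : ℝ) : ℂ) ^ 2 = 7 := by
    rw [← Complex.ofReal_pow, Real.sq_sqrt (by norm_num : (0:ℝ) ≤ 7)]
    norm_num
  obtain ⟨s, hs2, hsq⟩ : ∃ s : ℂ, s ^ 2 = 7 ∧ ((Real.sqrt 7 : ℝ) : ℂ) = s :=
    ⟨_, h7, rfl⟩
  obtain ⟨u, hu⟩ : ∃ u : ℂ, u ^ 2 = -s := by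
    refine ⟨((Real.sqrt (Real.sqrt 7) : ℝ) : ℂ) * Complex.I, ?_⟩
    rw [mul_pow, Complex.I_sq, ← Complex.ofReal_pow, Real.sq_sqrt (Real.sqrt_nonneg 7), ← hsq]
    ring
  obtain ⟨a, ha⟩ : ∃ a : ℂ, a ^ 6 = ((15985594249 : ℂ)/72301961339136) + ((-1510496677 : ℂ)/18075490334784)*s + ((19612637827 : ℂ)/144603922678272)*u + ((-1853220079 : ℂ)/36150980669568)*s*u :=
    ⟨(((15985594249 : ℂ)/72301961339136) + ((-1510496677 : ℂ)/18075490334784)*s + ((19612637827 : ℂ)/144603922678272)*u + ((-1853220079 : ℂ)/36150980669568)*s*u) ^ (((6:ℕ) : ℂ))⁻¹, Complex.cpow_nat_inv_pow _ (by norm_num)⟩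
  obtain ⟨A, hA⟩ : ∃ A : ℂ, A = a * ((92 : ℂ) + (32 : ℂ) * s) := ⟨_, rfl⟩
  obtain ⟨B, hB⟩ : ∃ B : ℂ, B = a * ((-44 : ℂ) + (-20 : ℂ) * s + ((22 : ℂ) + (10 : ℂ) * s) * u) := ⟨_, rfl⟩
  obtain ⟨C, hC⟩ : ∃ C : ℂ, C = a * ((-8 : ℂ) + (-2 : ℂ) * s + ((-30 : ℂ) + (-12 : ℂ) * s) * u) := ⟨_, rfl⟩
  obtain ⟨D, hD⟩ : ∃ D : ℂ, D = a * ((-19 : ℂ) + (-7 : ℂ) * s + ((-19 : ℂ) + (-7 : ℂ) * s) * u) := ⟨_, rfl⟩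
  have hc0 : (a * ((92 : ℂ) + (32 : ℂ) * s)) ^ 6 + 18 * (a * ((92 : ℂ) + (32 : ℂ) * s)) ^ 5 * (a * ((-8 : ℂ) + (-2 : ℂ) * s + ((-30 : ℂ) + (-12 : ℂ) * s) * u)) + (40 * (1 - 2 * s)) * (a * ((92 : ℂ) + (32 : ℂ) * s)) ^ 3 * (a * ((-8 : ℂ) + (-2 : ℂ) * s + ((-30 : ℂ) + (-12 : ℂ) * s) * u)) ^ 3 + (32 * (115 - 41 * s)) * (a * ((-8 : ℂ) + (-2 : ℂ) * s + ((-30 : ℂ) + (-12 : ℂ) * s) * u)) ^ 6 = 184 := by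
    linear_combination ((-357705232384 : ℂ) + (-3716744417280 : ℂ) * u + (-469297152000 : ℂ) * u ^ 2 + (176463360000 : ℂ) * u ^ 3 + (2861568000000 : ℂ) * u ^ 4 + (4292352000000 : ℂ) * u ^ 5 + (2682720000000 : ℂ) * u ^ 6 + (-618005590016 : ℂ) * s + (-7575035092992 : ℂ) * s * u + (230841446400 : ℂ) * s * u ^ 2 + (1416517632000 : ℂ) * s * u ^ 3 + (4989081600000 : ℂ) * s * u ^ 4 + (8127475200000 : ℂ) * s * u ^ 5 + (5482080000000 : ℂ) * s * u ^ 6 + (-424152317952 : ℂ) * s ^ 2 + (-6353380012032 : ℂ) * s ^ 2 * u + (1734468526080 : ℂ) * s ^ 2 * u ^ 2 + (2898992332800 : ℂ) * s ^ 2 * u ^ 3 + (3072764160000 : ℂ) * s ^ 2 * u ^ 4 + (5570726400000 : ℂ) * s ^ 2 * u ^ 5 + (4143052800000 : ℂ) * s ^ 2 * u ^ 6 + (-142000762880 : ℂ) * s ^ 3 + (-2778283376640 : ℂ) * s ^ 3 * u + (1892178247680 : ℂ) * s ^ 3 * u ^ 2 + (2754832343040 : ℂ) * s ^ 3 * u ^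 3 + (532935936000 : ℂ) * s ^ 3 * u ^ 4 + (1250380800000 : ℂ) * s ^ 3 * u ^ 5 + (1138406400000 : ℂ) * s ^ 3 * u ^ 6 + (-21312348160 : ℂ) * s ^ 4 + (-649904947200 : ℂ) * s ^ 4 * u + (968262543360 : ℂ) * s ^ 4 * u ^ 2 + (1426686566400 : ℂ) * s ^ 4 * u ^ 3 + (-241665638400 : ℂ) * s ^ 4 * u ^ 4 + (-355332096000 : ℂ) * s ^ 4 * u ^ 5 + (-194088960000 : ℂ) * s ^ 4 * u ^ 6 + (-207765504 : ℂ) * s ^ 5 + (-69223403520 : ℂ) * s ^ 5 * u + (265879480320 : ℂ) * s ^ 5 * u ^ 2 + (416743833600 : ℂ) * s ^ 5 * u ^ 3 + (-135503953920 : ℂ) * s ^ 5 * u ^ 4 + (-259422289920 : ℂ) * s ^ 5 * u ^ 5 + (-202449715200 : ℂ) * s ^ 5 * u ^ 6 + (286054400 : ℂ) * s ^ 6 + (-276590592 : ℂ) * s ^ 6 * u + (37961809920 : ℂ) * s ^ 6 * u ^ 2 + (64722862080 : ℂ) * s ^ 6 * u ^ 3 + (-24803573760 : ℂ) * s ^ 6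 * u ^ 4 + (-53652160512 : ℂ) * s ^ 6 * u ^ 5 + (-47775744000 : ℂ) * s ^ 6 * u ^ 6 + (20887552 : ℂ) * s ^ 7 + (374464512 : ℂ) * s ^ 7 * u + (2219581440 : ℂ) * s ^ 7 * u ^ 2 + (4167106560 : ℂ) * s ^ 7 * u ^ 3 + (-1632337920 : ℂ) * s ^ 7 * u ^ 4 + (-3917611008 : ℂ) * s ^ 7 * u ^ 5 + (-3917611008 : ℂ) * s ^ 7 * u ^ 6) * ha + (((3190928576560136920 : ℂ)/282429536481) + ((35112801209631225512 : ℂ)/282429536481) * u + ((-20218548316818212504 : ℂ)/282429536481) * s + ((56689876146942472136 : ℂ)/282429536481) * s * u + ((-54460263517823380336 : ℂ)/282429536481) * s ^ 2 + ((-2480183844918770816 : ℂ)/282429536481) * s ^ 2 * u + ((-84478271596838744 : ℂ)/10460353203) * s ^ 3 + ((-287310522012730868 : ℂ)/3486784401) * s ^ 3 * u + ((52832007980670289240 : ℂ)/282429536481) * s ^ 4 + ((13129861199591517512 : ℂ)/282429536481) * s ^ 4 * u + ((32727704311245665504 : ℂ)/282429536481) * s ^ 5 + ((22282923400852730068 :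 ℂ)/282429536481) * s ^ 5 * u + ((966699343968822224 : ℂ)/282429536481) * s ^ 6 + ((7473178289421073984 : ℂ)/282429536481) * s ^ 6 * u + ((-176891130429809984 : ℂ)/10460353203) * s ^ 7 + ((-609371297090944 : ℂ)/3486784401) * s ^ 7 * u + ((-18907157439053056 : ℂ)/3486784401) * s ^ 8 + ((-1751226156778496 : ℂ)/1162261467) * s ^ 8 * u + ((-68212992257024 : ℂ)/129140163) * s ^ 9 + ((-77805591796736 : ℂ)/387420489) * s ^ 9 * u) * hs2 + (((-6358445447034386440 : ℂ)/10460353203) + ((-85899202591342000 : ℂ)/3486784401) * u + ((2289463780315885000 : ℂ)/3486784401) * u ^ 2 + ((1554096673202000000 : ℂ)/1162261467) * u ^ 3 + ((50593139148875000 : ℂ)/43046721) * u ^ 4 + ((140965834381562500 : ℂ)/387420489) * u ^ 5 + ((-14678242944697053496 : ℂ)/10460353203) * s + ((-1142882464608296200 : ℂ)/1162261467) * s * u + ((-149119002859681000 : ℂ)/1162261467) * s * u ^ 2 + ((621564610743287500 : ℂ)/387420489) * s * u ^ 3 + ((241513445728600000 : ℂ)/129140163) * s * u ^ 4 + ((78260180270937500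 : ℂ)/129140163) * s * u ^ 5 + ((199841979882703952 : ℂ)/10460353203) * s ^ 2 + ((-2992968168949804220 : ℂ)/3486784401) * s ^ 2 * u + ((-4487963638464146200 : ℂ)/3486784401) * s ^ 2 * u ^ 2 + ((124909401220045000 : ℂ)/1162261467) * s ^ 2 * u ^ 3 + ((102899994489125000 : ℂ)/129140163) * s ^ 2 * u ^ 4 + ((108823600238450000 : ℂ)/387420489) * s ^ 2 * u ^ 5 + ((15789071460299708008 : ℂ)/10460353203) * s ^ 3 + ((1489110456572098600 : ℂ)/3486784401) * s ^ 3 * u + ((-2478168662398557760 : ℂ)/3486784401) * s ^ 3 * u ^ 2 + ((-645289143484305500 : ℂ)/1162261467) * s ^ 3 * u ^ 3 + ((-9061653554950000 : ℂ)/43046721) * s ^ 3 * u ^ 4 + ((-22464426135250000 : ℂ)/387420489) * s ^ 3 * u ^ 5 + ((8587587906290898040 : ℂ)/10460353203) * s ^ 4 + ((784236192424036400 : ℂ)/1162261467) * s ^ 4 * u + ((21284972013887840 : ℂ)/129140163) * s ^ 4 * u ^ 2 + ((-23912114369343200 : ℂ)/129140163) * s ^ 4 * u ^ 3 + ((-32328505735888000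 : ℂ)/129140163) * s ^ 4 * u ^ 4 + ((-3645317403760000 : ℂ)/43046721) * s ^ 4 * u ^ 5 + ((-1705272099634602800 : ℂ)/10460353203) * s ^ 5 + ((503862444907464140 : ℂ)/3486784401) * s ^ 5 * u + ((780895498977044320 : ℂ)/3486784401) * s ^ 5 * u ^ 2 + ((59309896032322400 : ℂ)/1162261467) * s ^ 5 * u ^ 3 + ((-5877337399813760 : ℂ)/129140163) * s ^ 5 * u ^ 4 + ((-6783196993044800 : ℂ)/387420489) * s ^ 5 * u ^ 5 + ((-2450576851178566936 : ℂ)/10460353203) * s ^ 6 + ((-279035400859521520 : ℂ)/3486784401) * s ^ 6 * u + ((135167188137497920 : ℂ)/3486784401) * s ^ 6 * u ^ 2 + ((35922666802505984 : ℂ)/1162261467) * s ^ 6 * u ^ 3 + ((177595717634176 : ℂ)/14348907) * s ^ 6 * u ^ 4 + ((1510328641542400 : ℂ)/387420489) * s ^ 6 * u ^ 5 + ((-432872244062643856 : ℂ)/10460353203) * s ^ 7 + ((-4783335311434736 : ℂ)/129140163) * s ^ 7 * u + ((-15595040743750016 : ℂ)/1162261467) * s ^ 7 * u ^ 2 + ((297938442527936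 : ℂ)/387420489) * s ^ 7 * u ^ 3 + ((690293941427968 : ℂ)/129140163) * s ^ 7 * u ^ 4 + ((247664811271936 : ℂ)/129140163) * s ^ 7 * u ^ 5 + ((138214363820077376 : ℂ)/10460353203) * s ^ 8 + ((-4292380986103424 : ℂ)/3486784401) * s ^ 8 * u + ((-18907157439053056 : ℂ)/3486784401) * s ^ 8 * u ^ 2 + ((-1751226156778496 : ℂ)/1162261467) * s ^ 8 * u ^ 3 + ((68212992257024 : ℂ)/129140163) * s ^ 8 * u ^ 4 + ((77805591796736 : ℂ)/387420489) * s ^ 8 * u ^ 5 + ((18907157439053056 : ℂ)/3486784401) * s ^ 9 + ((1751226156778496 : ℂ)/1162261467) * s ^ 9 * u + ((-68212992257024 : ℂ)/129140163) * s ^ 9 * u ^ 2 + ((-77805591796736 : ℂ)/387420489) * s ^ 9 * u ^ 3 + ((68212992257024 : ℂ)/129140163) * s ^ 10 + ((77805591796736 : ℂ)/387420489) * s ^ 10 * u) * hu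
  have hc1 : 6 * (a * ((92 : ℂ) + (32 : ℂ) * s)) ^ 5 * (a * ((-44 : ℂ) + (-20 : ℂ) * s + ((22 : ℂ) + (10 : ℂ) * s) * u)) + 18 * (a * ((92 : ℂ) + (32 : ℂ) * s)) ^ 5 * (a * ((-19 : ℂ) + (-7 : ℂ) * s + ((-19 : ℂ) + (-7 : ℂ) * s) * u)) + 18 * 5 * (a * ((92 : ℂ) + (32 : ℂ) * s)) ^ 4 * (a * ((-44 : ℂ) + (-20 : ℂ) * s + ((22 : ℂ) + (10 : ℂ) * s) * u)) * (a * ((-8 : ℂ) + (-2 : ℂ) * s + ((-30 : ℂ) + (-12 : ℂ) * s) * u)) + (40 * (1 - 2 * s)) * 3 * (a * ((92 : ℂ) + (32 : ℂ) * s)) ^ 3 * (a * ((-8 : ℂ) + (-2 : ℂ) * s + ((-30 : ℂ) + (-12 : ℂ) * s) * u)) ^ 2 * (a * ((-19 : ℂ) + (-7 : ℂ) * s + ((-19 : ℂ) + (-7 : ℂ) * s) * u)) + (40 * (1 - 2 * s)) * 3 * (a * ((92 : ℂ) + (32 : ℂ) * s)) ^ 2 * (a * ((-44 : ℂ) + (-20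 : ℂ) * s + ((22 : ℂ) + (10 : ℂ) * s) * u)) * (a * ((-8 : ℂ) + (-2 : ℂ) * s + ((-30 : ℂ) + (-12 : ℂ) * s) * u)) ^ 3 + (32 * (115 - 41 * s)) * 6 * (a * ((-8 : ℂ) + (-2 : ℂ) * s + ((-30 : ℂ) + (-12 : ℂ) * s) * u)) ^ 5 * (a * ((-19 : ℂ) + (-7 : ℂ) * s + ((-19 : ℂ) + (-7 : ℂ) * s) * u)) = -192 := by
    linear_combination ((-1801499215872 : ℂ) + (5543561656320 : ℂ) * u + (-3677941555200 : ℂ) * u ^ 2 + (8308562688000 : ℂ) * u ^ 3 + (20238439680000 : ℂ) * u ^ 4 + (23786784000000 : ℂ) * u ^ 5 + (10194336000000 : ℂ) * u ^ 6 + (-3785812555776 : ℂ) * s + (14246080425984 : ℂ) * s * u + (-6378174074880 : ℂ) * s * u ^ 2 + (15416809574400 : ℂ) * s * u ^ 3 + (37506571776000 : ℂ) * s * u ^ 4 + (45817747200000 : ℂ) * s * u ^ 5 + (20509977600000 : ℂ) * s * u ^ 6 + (-3305483569152 : ℂ) * s ^ 2 + (15215063113728 : ℂ) * s ^ 2 *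 u + (-3322365880320 : ℂ) * s ^ 2 * u ^ 2 + (11160809441280 : ℂ) * s ^ 2 * u ^ 3 + (25926104678400 : ℂ) * s ^ 2 * u ^ 4 + (32214101760000 : ℂ) * s ^ 2 * u ^ 5 + (15214521600000 : ℂ) * s ^ 2 * u ^ 6 + (-1522741770240 : ℂ) * s ^ 3 + (8744865669120 : ℂ) * s ^ 3 * u + (404857681920 : ℂ) * s ^ 3 * u ^ 2 + (3686426173440 : ℂ) * s ^ 3 * u ^ 3 + (6936940984320 : ℂ) * s ^ 3 * u ^ 4 + (7699297536000 : ℂ) * s ^ 3 * u ^ 5 + (4040409600000 : ℂ) * s ^ 3 * u ^ 6 + (-382840135680 : ℂ) * s ^ 4 + (2908708638720 : ℂ) * s ^ 4 * u + (1099700029440 : ℂ) * s ^ 4 * u ^ 2 + (340914769920 : ℂ) * s ^ 4 * u ^ 3 + (-503780290560 : ℂ) * s ^ 4 * u ^ 4 + (-1889928806400 : ℂ) * s ^ 4 * u ^ 5 + (-759932928000 : ℂ) * s ^ 4 * u ^ 6 + (-46525335552 : ℂ) * s ^ 5 + (554840893440 : ℂ) * s ^ 5 * u + (462759505920 : ℂ)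 * s ^ 5 * u ^ 2 + (-120499384320 : ℂ) * s ^ 5 * u ^ 3 + (-721742192640 : ℂ) * s ^ 5 * u ^ 4 + (-1521119969280 : ℂ) * s ^ 5 * u ^ 5 + (-737060290560 : ℂ) * s ^ 5 * u ^ 6 + (-1130999808 : ℂ) * s ^ 6 + (55181801472 : ℂ) * s ^ 6 * u + (84840376320 : ℂ) * s ^ 6 * u ^ 2 + (-35911434240 : ℂ) * s ^ 6 * u ^ 3 + (-154136494080 : ℂ) * s ^ 6 * u ^ 4 + (-329087287296 : ℂ) * s ^ 6 * u ^ 5 + (-170153312256 : ℂ) * s ^ 6 * u ^ 6 + (179116032 : ℂ) * s ^ 7 + (2119821312 : ℂ) * s ^ 7 * u + (5989109760 : ℂ) * s ^ 7 * u ^ 2 + (-2886451200 : ℂ) * s ^ 7 * u ^ 3 + (-10988421120 : ℂ) * s ^ 7 * u ^ 4 + (-25138003968 : ℂ) * s ^ 7 * u ^ 5 + (-13711638528 : ℂ) * s ^ 7 * u ^ 6) * ha + (((5356774855439895016 : ℂ)/94143178827) + ((-1466415581576242012 : ℂ)/10460353203) * u + ((8408050827417175868 : ℂ)/94143178827) *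 s + ((-1385581084001643284 : ℂ)/10460353203) * s * u + ((-6851473787728258052 : ℂ)/10460353203) * s ^ 2 + ((-3997729937881365740 : ℂ)/3486784401) * s ^ 2 * u + ((-20236628104894579216 : ℂ)/94143178827) * s ^ 3 + ((-15706827578619092000 : ℂ)/10460353203) * s ^ 3 * u + ((73054926907265988532 : ℂ)/94143178827) * s ^ 4 + ((-5387722765848293200 : ℂ)/10460353203) * s ^ 4 * u + ((6416942345037265100 : ℂ)/10460353203) * s ^ 5 + ((443968279436338816 : ℂ)/3486784401) * s ^ 5 * u + ((7497643693532625292 : ℂ)/94143178827) * s ^ 6 + ((1077979908617415896 : ℂ)/10460353203) * s ^ 6 * u + ((-5822607804558053200 : ℂ)/94143178827) * s ^ 7 + ((91978212004220512 : ℂ)/10460353203) * s ^ 7 * u + ((-27408308599324352 : ℂ)/1162261467) * s ^ 8 + ((-4880255886343552 : ℂ)/1162261467) * s ^ 8 * u + ((-2829508184317696 : ℂ)/1162261467) * s ^ 9 + ((-272319571288576 : ℂ)/387420489) * s ^ 9 * u) * hs2 + (((-5771025852134157860 : ℂ)/94143178827) + ((13997431146881281400 : ℂ)/10460353203) * u +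 ((6510415065404388500 : ℂ)/1162261467) * u ^ 2 + ((9302830364684897500 : ℂ)/1162261467) * u ^ 3 + ((6369330452104437500 : ℂ)/1162261467) * u ^ 4 + ((535670170649937500 : ℂ)/387420489) * u ^ 5 + ((-476018230243026017372 : ℂ)/94143178827) * s + ((-62410036597867901140 : ℂ)/10460353203) * s * u + ((3238299040213504300 : ℂ)/1162261467) * s * u ^ 2 + ((4187695109328576500 : ℂ)/387420489) * s * u ^ 3 + ((3361889611490712500 : ℂ)/387420489) * s * u ^ 4 + ((97250017218100000 : ℂ)/43046721) * s * u ^ 5 + ((-155754869823048814388 : ℂ)/94143178827) * s ^ 2 + ((-102025500323613583480 : ℂ)/10460353203) * s ^ 2 * u + ((-6225474706514938040 : ℂ)/1162261467) * s ^ 2 * u ^ 2 + ((3054469556654373800 : ℂ)/1162261467) * s ^ 2 * u ^ 3 + ((4265901076212032500 : ℂ)/1162261467) * s ^ 2 * u ^ 4 + ((392122376058887500 : ℂ)/387420489) * s ^ 2 * u ^ 5 + ((577058766065798901392 : ℂ)/94143178827) * s ^ 3 + ((-26364565621485746300 : ℂ)/10460353203) * s ^ 3 * u + ((-62780983213351340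 : ℂ)/14348907) * s ^ 3 * u ^ 2 + ((-2777881855790809360 : ℂ)/1162261467) * s ^ 3 * u ^ 3 + ((-1145117383288905500 : ℂ)/1162261467) * s ^ 3 * u ^ 4 + ((-89860729403675000 : ℂ)/387420489) * s ^ 3 * u ^ 5 + ((426547459220672788460 : ℂ)/94143178827) * s ^ 4 + ((23910053552929701460 : ℂ)/10460353203) * s ^ 4 * u + ((176005185668669300 : ℂ)/1162261467) * s ^ 4 * u ^ 2 + ((-161844326019789760 : ℂ)/129140163) * s ^ 4 * u ^ 3 + ((-448121949570943600 : ℂ)/387420489) * s ^ 4 * u ^ 4 + ((-40058586678824000 : ℂ)/129140163) * s ^ 4 * u ^ 5 + ((-20228939600761519120 : ℂ)/94143178827) * s ^ 5 + ((12599543499475606840 : ℂ)/10460353203) * s ^ 5 * u + ((1168522233585839480 : ℂ)/1162261467) * s ^ 5 * u ^ 2 + ((69447603536589040 : ℂ)/1162261467) * s ^ 5 * u ^ 3 + ((-242774588359145440 : ℂ)/1162261467) * s ^ 5 * u ^ 4 + ((-23636843846357440 : ℂ)/387420489) * s ^ 5 * u ^ 5 + ((-98498109745031173076 : ℂ)/94143178827)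 * s ^ 6 + ((-730530250055504380 : ℂ)/10460353203) * s ^ 6 * u + ((30531585173240320 : ℂ)/129140163) * s ^ 6 * u ^ 2 + ((152789283754410592 : ℂ)/1162261467) * s ^ 6 * u ^ 3 + ((66617025436957760 : ℂ)/1162261467) * s ^ 6 * u ^ 4 + ((5697510586141376 : ℂ)/387420489) * s ^ 6 * u ^ 5 + ((-23039563805657519468 : ℂ)/94143178827) * s ^ 7 + ((-1387385076772508968 : ℂ)/10460353203) * s ^ 7 * u + ((-52785487242663200 : ℂ)/1162261467) * s ^ 7 * u ^ 2 + ((5287340309589568 : ℂ)/387420489) * s ^ 7 * u ^ 3 + ((3183060439417408 : ℂ)/129140163) * s ^ 7 * u ^ 4 + ((886278237400960 : ℂ)/129140163) * s ^ 7 * u ^ 5 + ((4218276664049919568 : ℂ)/94143178827) * s ^ 8 + ((-143446610977761376 : ℂ)/10460353203) * s ^ 8 * u + ((-27408308599324352 : ℂ)/1162261467) * s ^ 8 * u ^ 2 + ((-4880255886343552 : ℂ)/1162261467) * s ^ 8 * u ^ 3 + ((2829508184317696 : ℂ)/1162261467) * s ^ 8 * u ^ 4 + ((272319571288576 : ℂ)/387420489)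 * s ^ 8 * u ^ 5 + ((27408308599324352 : ℂ)/1162261467) * s ^ 9 + ((4880255886343552 : ℂ)/1162261467) * s ^ 9 * u + ((-2829508184317696 : ℂ)/1162261467) * s ^ 9 * u ^ 2 + ((-272319571288576 : ℂ)/387420489) * s ^ 9 * u ^ 3 + ((2829508184317696 : ℂ)/1162261467) * s ^ 10 + ((272319571288576 : ℂ)/387420489) * s ^ 10 * u) * hu
  have hc2 : 15 * (a * ((92 : ℂ) + (32 : ℂ) * s)) ^ 4 * (a * ((-44 : ℂ) + (-20 : ℂ) * s + ((22 : ℂ) + (10 : ℂ) * s) * u)) ^ 2 + 18 * 5 * (a * ((92 : ℂ) + (32 : ℂ) * s)) ^ 4 * (a * ((-44 : ℂ) + (-20 : ℂ) * s + ((22 : ℂ) + (10 : ℂ) * s) * u)) * (a * ((-19 : ℂ) + (-7 : ℂ) * s + ((-19 : ℂ) + (-7 : ℂ) * s) * u)) + 18 * 10 * (a * ((92 : ℂ) + (32 : ℂ) * s)) ^ 3 * (a * ((-44 : ℂ) + (-20 : ℂ) * s + ((22 : ℂ) + (10 : ℂ) * s) * u)) ^ 2 * (a * ((-8 : ℂ)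 + (-2 : ℂ) * s + ((-30 : ℂ) + (-12 : ℂ) * s) * u)) + (40 * (1 - 2 * s)) * 3 * (a * ((92 : ℂ) + (32 : ℂ) * s)) ^ 3 * (a * ((-8 : ℂ) + (-2 : ℂ) * s + ((-30 : ℂ) + (-12 : ℂ) * s) * u)) * (a * ((-19 : ℂ) + (-7 : ℂ) * s + ((-19 : ℂ) + (-7 : ℂ) * s) * u)) ^ 2 + (40 * (1 - 2 * s)) * 9 * (a * ((92 : ℂ) + (32 : ℂ) * s)) ^ 2 * (a * ((-44 : ℂ) + (-20 : ℂ) * s + ((22 : ℂ) + (10 : ℂ) * s) * u)) * (a * ((-8 : ℂ) + (-2 : ℂ) * s + ((-30 : ℂ) + (-12 : ℂ) * s) * u)) ^ 2 * (a * ((-19 : ℂ) + (-7 : ℂ) * s + ((-19 : ℂ) + (-7 : ℂ) * s) * u)) + (40 * (1 - 2 * s)) * 3 * (a * ((92 : ℂ) + (32 : ℂ) * s)) * (a * ((-44 : ℂ) + (-20 : ℂ) * s + ((22 : ℂ) + (10 : ℂ) * s) * u)) ^ 2 * (a * ((-8 : ℂ) + (-2 : ℂ) * s + ((-30 : ℂ)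 + (-12 : ℂ) * s) * u)) ^ 3 + (32 * (115 - 41 * s)) * 15 * (a * ((-8 : ℂ) + (-2 : ℂ) * s + ((-30 : ℂ) + (-12 : ℂ) * s) * u)) ^ 4 * (a * ((-19 : ℂ) + (-7 : ℂ) * s + ((-19 : ℂ) + (-7 : ℂ) * s) * u)) ^ 2 = -300 := by
    linear_combination ((5263533557760 : ℂ) + (-4327266662400 : ℂ) * u + (15027466414080 : ℂ) * u ^ 2 + (29556690739200 : ℂ) * u ^ 3 + (56777443776000 : ℂ) * u ^ 4 + (49354894080000 : ℂ) * u ^ 5 + (16141032000000 : ℂ) * u ^ 6 + (12046963153920 : ℂ) * s + (-11099728158720 : ℂ) * s * u + (28953534981120 : ℂ) * s * u ^ 2 + (51695568506880 : ℂ) * s * u ^ 3 + (106425157132800 : ℂ) * s * u ^ 4 + (95375719296000 : ℂ) * s * u ^ 5 + (31964414400000 : ℂ) * s * u ^ 6 + (11529857433600 : ℂ) * s ^ 2 + (-11527264189440 : ℂ) * s ^ 2 * u + (21603300894720 : ℂ) * s ^ 2 * u ^ 2 + (32135404078080 : ℂ) * s ^ 2 * u ^ 3 + (73206061493760 : ℂ)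 * s ^ 2 * u ^ 4 + (67620705638400 : ℂ) * s ^ 2 * u ^ 5 + (23268047040000 : ℂ) * s ^ 2 * u ^ 6 + (5924737305600 : ℂ) * s ^ 3 + (-6191639070720 : ℂ) * s ^ 3 * u + (7084753474560 : ℂ) * s ^ 3 * u ^ 2 + (5774273187840 : ℂ) * s ^ 3 * u ^ 3 + (17646542737920 : ℂ) * s ^ 3 * u ^ 4 + (16730414853120 : ℂ) * s ^ 3 * u ^ 5 + (5965233984000 : ℂ) * s ^ 3 * u ^ 6 + (1735426951680 : ℂ) * s ^ 4 + (-1790004725760 : ℂ) * s ^ 4 * u + (383158479360 : ℂ) * s ^ 4 * u ^ 2 + (-2464365911040 : ℂ) * s ^ 4 * u ^ 3 + (-3529650816000 : ℂ) * s ^ 4 * u ^ 4 + (-3563635046400 : ℂ) * s ^ 4 * u ^ 5 + (-1232415129600 : ℂ) * s ^ 4 * u ^ 6 + (279796999680 : ℂ) * s ^ 5 + (-249712174080 : ℂ) * s ^ 5 * u + (-402662914560 : ℂ) * s ^ 5 * u ^ 2 + (-1429632737280 : ℂ) * s ^ 5 * u ^ 3 + (-2982344832000 : ℂ) * s ^ 5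 * u ^ 4 + (-3071308492800 : ℂ) * s ^ 5 * u ^ 5 + (-1117340282880 : ℂ) * s ^ 5 * u ^ 6 + (20987973120 : ℂ) * s ^ 6 + (-8034401280 : ℂ) * s ^ 6 * u + (-109523950080 : ℂ) * s ^ 6 * u ^ 2 + (-267198842880 : ℂ) * s ^ 6 * u ^ 3 + (-633665617920 : ℂ) * s ^ 6 * u ^ 4 + (-674185420800 : ℂ) * s ^ 6 * u ^ 5 + (-252425134080 : ℂ) * s ^ 6 * u ^ 6 + (366973440 : ℂ) * s ^ 7 + (1021301760 : ℂ) * s ^ 7 * u + (-8985976320 : ℂ) * s ^ 7 * u ^ 2 + (-17931939840 : ℂ) * s ^ 7 * u ^ 3 + (-47203430400 : ℂ) * s ^ 7 * u ^ 4 + (-51995934720 : ℂ) * s ^ 7 * u ^ 5 + (-19996139520 : ℂ) * s ^ 7 * u ^ 6) * ha + (((-15651178099132285540 : ℂ)/94143178827) + ((3266004537397141340 : ℂ)/94143178827) * u + ((6884813737460226520 : ℂ)/94143178827) * s + ((125094580749004881370 : ℂ)/94143178827) * s * u + ((-21531346305010107110 : ℂ)/10460353203) * s ^ 2 + ((-8647748229976222855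 : ℂ)/10460353203) * s ^ 2 * u + ((-173894086905549983330 : ℂ)/94143178827) * s ^ 3 + ((-276305394680797687040 : ℂ)/94143178827) * s ^ 3 * u + ((63061619925049852760 : ℂ)/94143178827) * s ^ 4 + ((-139615712644392350050 : ℂ)/94143178827) * s ^ 4 * u + ((11415150161716730810 : ℂ)/10460353203) * s ^ 5 + ((764343860542729840 : ℂ)/10460353203) * s ^ 5 * u + ((22700270604782308460 : ℂ)/94143178827) * s ^ 6 + ((20316081707947608455 : ℂ)/94143178827) * s ^ 6 * u + ((-7610494877000170760 : ℂ)/94143178827) * s ^ 7 + ((3647838179044270540 : ℂ)/94143178827) * s ^ 7 * u + ((-411280695963852160 : ℂ)/10460353203) * s ^ 8 + ((-1341706834021840 : ℂ)/387420489) * s ^ 8 * u + ((-5040127149082240 : ℂ)/1162261467) * s ^ 9 + ((-1191398124387520 : ℂ)/1162261467) * s ^ 9 * u) * hs2 + (((257537010118107762140 : ℂ)/94143178827) + ((807090356273965892660 : ℂ)/94143178827) * u + ((173244142667076634850 : ℂ)/10460353203) * u ^ 2 + ((801221845782621625 : ℂ)/43046721) * u ^ 3 + ((11927948488982416250 : ℂ)/1162261467)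 * u ^ 4 + ((2544433310587203125 : ℂ)/1162261467) * u ^ 5 + ((-1195610056519374695110 : ℂ)/94143178827) * s + ((-611604933560510286625 : ℂ)/94143178827) * s * u + ((146643536646321794540 : ℂ)/10460353203) * s * u ^ 2 + ((30564375354695406100 : ℂ)/1162261467) * s * u ^ 3 + ((6246785069535394000 : ℂ)/387420489) * s * u ^ 4 + ((1359029236825428125 : ℂ)/387420489) * s * u ^ 5 + ((-1191529878794683908130 : ℂ)/94143178827) * s ^ 2 + ((-2077415046664419434620 : ℂ)/94143178827) * s ^ 2 * u + ((-74515844372724443260 : ℂ)/10460353203) * s ^ 2 * u ^ 2 + ((1026117347914312180 : ℂ)/129140163) * s ^ 2 * u ^ 3 + ((7851575369140782550 : ℂ)/1162261467) * s ^ 2 * u ^ 4 + ((1763433973274276875 : ℂ)/1162261467) * s ^ 2 * u ^ 5 + ((624724715399487426700 : ℂ)/94143178827) * s ^ 3 + ((-894462054466464988730 : ℂ)/94143178827) * s ^ 3 * u + ((-102883965095881514600 : ℂ)/10460353203) * s ^ 3 * u ^ 2 + ((-5611878570659062810 : ℂ)/1162261467) * s ^ 3 * u ^ 3 + ((-2118630017905089260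 : ℂ)/1162261467) * s ^ 3 * u ^ 4 + ((-445997895874113875 : ℂ)/1162261467) * s ^ 3 * u ^ 5 + ((885219503778881816770 : ℂ)/94143178827) * s ^ 4 + ((328540971607673039635 : ℂ)/94143178827) * s ^ 4 * u + ((-11113478351554339670 : ℂ)/10460353203) * s ^ 4 * u ^ 2 + ((-3702512010791025115 : ℂ)/1162261467) * s ^ 4 * u ^ 3 + ((-272739440224693580 : ℂ)/129140163) * s ^ 4 * u ^ 4 + ((-183230659426675900 : ℂ)/387420489) * s ^ 4 * u ^ 5 + ((94075919450874741790 : ℂ)/94143178827) * s ^ 5 + ((282543241474742062810 : ℂ)/94143178827) * s ^ 5 * u + ((17573106918752343400 : ℂ)/10460353203) * s ^ 5 * u ^ 2 + ((-51083473811157850 : ℂ)/387420489) * s ^ 5 * u ^ 3 + ((-439251271317289240 : ℂ)/1162261467) * s ^ 5 * u ^ 4 + ((-102705797022012760 : ℂ)/1162261467) * s ^ 5 * u ^ 5 + ((-156167293154486800660 : ℂ)/94143178827) * s ^ 6 + ((18643634296784803565 : ℂ)/94143178827) * s ^ 6 * u + ((5482251241921012100 : ℂ)/10460353203) * s ^ 6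 * u ^ 2 + ((305565654607049920 : ℂ)/1162261467) * s ^ 6 * u ^ 3 + ((120372512505545840 : ℂ)/1162261467) * s ^ 6 * u ^ 4 + ((26781017361851120 : ℂ)/1162261467) * s ^ 6 * u ^ 5 + ((-48613841493013678180 : ℂ)/94143178827) * s ^ 7 + ((-22608130835683487995 : ℂ)/94143178827) * s ^ 7 * u + ((-520775275184929480 : ℂ)/10460353203) * s ^ 7 * u ^ 2 + ((55651872891147640 : ℂ)/1162261467) * s ^ 7 * u ^ 3 + ((17116974941512160 : ℂ)/387420489) * s ^ 7 * u ^ 4 + ((440285239406320 : ℂ)/43046721) * s ^ 7 * u ^ 5 + ((4752742783470540680 : ℂ)/94143178827) * s ^ 8 + ((-4323360915571994380 : ℂ)/94143178827) * s ^ 8 * u + ((-411280695963852160 : ℂ)/10460353203) * s ^ 8 * u ^ 2 + ((-1341706834021840 : ℂ)/387420489) * s ^ 8 * u ^ 3 + ((5040127149082240 : ℂ)/1162261467) * s ^ 8 * u ^ 4 + ((1191398124387520 : ℂ)/1162261467) * s ^ 8 * u ^ 5 + ((411280695963852160 : ℂ)/10460353203) * s ^ 9 + ((1341706834021840 : ℂ)/387420489)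 * s ^ 9 * u + ((-5040127149082240 : ℂ)/1162261467) * s ^ 9 * u ^ 2 + ((-1191398124387520 : ℂ)/1162261467) * s ^ 9 * u ^ 3 + ((5040127149082240 : ℂ)/1162261467) * s ^ 10 + ((1191398124387520 : ℂ)/1162261467) * s ^ 10 * u) * hu
  have hc3 : 20 * (a * ((92 : ℂ) + (32 : ℂ) * s)) ^ 3 * (a * ((-44 : ℂ) + (-20 : ℂ) * s + ((22 : ℂ) + (10 : ℂ) * s) * u)) ^ 3 + 18 * 10 * (a * ((92 : ℂ) + (32 : ℂ) * s)) ^ 3 * (a * ((-44 : ℂ) + (-20 : ℂ) * s + ((22 : ℂ) + (10 : ℂ) * s) * u)) ^ 2 * (a * ((-19 : ℂ) + (-7 : ℂ) * s + ((-19 : ℂ) + (-7 : ℂ) * s) * u)) + 18 * 10 * (a * ((92 : ℂ) + (32 : ℂ) * s)) ^ 2 * (a * ((-44 : ℂ) + (-20 : ℂ) * s + ((22 : ℂ) + (10 : ℂ) * s) * u)) ^ 3 * (a * ((-8 : ℂ) + (-2 : ℂ) * s + ((-30 : ℂ) + (-12 : ℂ) * s) * u)) + (40 * (1 - 2 * s))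 * (a * ((92 : ℂ) + (32 : ℂ) * s)) ^ 3 * (a * ((-19 : ℂ) + (-7 : ℂ) * s + ((-19 : ℂ) + (-7 : ℂ) * s) * u)) ^ 3 + (40 * (1 - 2 * s)) * 9 * (a * ((92 : ℂ) + (32 : ℂ) * s)) ^ 2 * (a * ((-44 : ℂ) + (-20 : ℂ) * s + ((22 : ℂ) + (10 : ℂ) * s) * u)) * (a * ((-8 : ℂ) + (-2 : ℂ) * s + ((-30 : ℂ) + (-12 : ℂ) * s) * u)) * (a * ((-19 : ℂ) + (-7 : ℂ) * s + ((-19 : ℂ) + (-7 : ℂ) * s) * u)) ^ 2 + (40 * (1 - 2 * s)) * 9 * (a * ((92 : ℂ) + (32 : ℂ) * s)) * (a * ((-44 : ℂ) + (-20 : ℂ) * s + ((22 : ℂ) + (10 : ℂ) * s) * u)) ^ 2 * (a * ((-8 : ℂ) + (-2 : ℂ) * s + ((-30 : ℂ) + (-12 : ℂ) * s) * u)) ^ 2 * (a * ((-19 : ℂ) + (-7 : ℂ) * s + ((-19 : ℂ) + (-7 : ℂ) * s) * u)) + (40 * (1 - 2 * s)) * (a * ((-44 : ℂ) + (-20 :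 ℂ) * s + ((22 : ℂ) + (10 : ℂ) * s) * u)) ^ 3 * (a * ((-8 : ℂ) + (-2 : ℂ) * s + ((-30 : ℂ) + (-12 : ℂ) * s) * u)) ^ 3 + (32 * (115 - 41 * s)) * 20 * (a * ((-8 : ℂ) + (-2 : ℂ) * s + ((-30 : ℂ) + (-12 : ℂ) * s) * u)) ^ 3 * (a * ((-19 : ℂ) + (-7 : ℂ) * s + ((-19 : ℂ) + (-7 : ℂ) * s) * u)) ^ 3 = -320 := by
    linear_combination ((-5088389685760 : ℂ) + (8833243891200 : ℂ) * u + (18757892981760 : ℂ) * u ^ 2 + (56999593848320 : ℂ) * u ^ 3 + (75889118592000 : ℂ) * u ^ 4 + (51580463040000 : ℂ) * u ^ 5 + (13618704960000 : ℂ) * u ^ 6 + (-12363218869760 : ℂ) * s + (16969830021120 : ℂ) * s * u + (29267675719680 : ℂ) * s * u ^ 2 + (104532064952320 : ℂ) * s * u ^ 3 + (142169388364800 : ℂ) * s * u ^ 4 + (99217498752000 : ℂ) * s * u ^ 5 + (26555262912000 : ℂ) * s * u ^ 6 + (-12475181145600 : ℂ) * s ^ 2 + (12513408491520 : ℂ)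 * s ^ 2 * u + (13497496957440 : ℂ) * s ^ 2 * u ^ 2 + (69910496663040 : ℂ) * s ^ 2 * u ^ 3 + (96686391052800 : ℂ) * s ^ 2 * u ^ 4 + (70062960614400 : ℂ) * s ^ 2 * u ^ 5 + (18995856652800 : ℂ) * s ^ 2 * u ^ 6 + (-6712588797440 : ℂ) * s ^ 3 + (3888257157120 : ℂ) * s ^ 3 * u + (-1811391843840 : ℂ) * s ^ 3 * u ^ 2 + (15771353866240 : ℂ) * s ^ 3 * u ^ 3 + (21506732720640 : ℂ) * s ^ 3 * u ^ 4 + (17298433612800 : ℂ) * s ^ 3 * u ^ 5 + (4733947722240 : ℂ) * s ^ 3 * u ^ 6 + (-2043007068160 : ℂ) * s ^ 4 + (18705384960 : ℂ) * s ^ 4 * u + (-3812420006400 : ℂ) * s ^ 4 * u ^ 2 + (-3858603558400 : ℂ) * s ^ 4 * u ^ 3 + (-6286308825600 : ℂ) * s ^ 4 * u ^ 4 + (-3636052001280 : ℂ) * s ^ 4 * u ^ 5 + (-1030348200960 : ℂ) * s ^ 4 * u ^ 6 + (-338425804800 : ℂ) * s ^ 5 + (-318898252800 : ℂ) * s ^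 5 * u + (-1403362229760 : ℂ) * s ^ 5 * u ^ 2 + (-2912004771840 : ℂ) * s ^ 5 * u ^ 3 + (-4584901086720 : ℂ) * s ^ 5 * u ^ 4 + (-3137156904960 : ℂ) * s ^ 5 * u ^ 5 + (-892314040320 : ℂ) * s ^ 5 * u ^ 6 + (-25400197120 : ℂ) * s ^ 6 + (-81058022400 : ℂ) * s ^ 6 * u + (-223731194880 : ℂ) * s ^ 6 * u ^ 2 + (-600386137600 : ℂ) * s ^ 6 * u ^ 3 + (-961631032320 : ℂ) * s ^ 6 * u ^ 4 + (-687072430080 : ℂ) * s ^ 6 * u ^ 5 + (-197783285760 : ℂ) * s ^ 6 * u ^ 6 + (-364989440 : ℂ) * s ^ 7 + (-6640512000 : ℂ) * s ^ 7 * u + (-13510947840 : ℂ) * s ^ 7 * u ^ 2 + (-43822714880 : ℂ) * s ^ 7 * u ^ 3 + (-71884800000 : ℂ) * s ^ 7 * u ^ 4 + (-52871823360 : ℂ) * s ^ 7 * u ^ 5 + (-15414312960 : ℂ) * s ^ 7 * u ^ 6) * ha + (((45391132678977870910 : ℂ)/282429536481) + ((-50952165587307194245 : ℂ)/282429536481)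 * u + ((308798599568912127925 : ℂ)/282429536481) * s + ((546648236881654499395 : ℂ)/282429536481) * s * u + ((-640371662538009031715 : ℂ)/282429536481) * s ^ 2 + ((-3637907619997588000 : ℂ)/31381059609) * s ^ 2 * u + ((-945707048304231945160 : ℂ)/282429536481) * s ^ 3 + ((-876614062458322734830 : ℂ)/282429536481) * s ^ 3 * u + ((-84443584688910141160 : ℂ)/282429536481) * s ^ 4 + ((-535657372212932160955 : ℂ)/282429536481) * s ^ 4 * u + ((275729472631251909275 : ℂ)/282429536481) * s ^ 5 + ((-1797633584281914365 : ℂ)/31381059609) * s ^ 5 * u + ((95830508147310808525 : ℂ)/282429536481) * s ^ 6 + ((66062240816176692800 : ℂ)/282429536481) * s ^ 6 * u + ((-10910326688731941680 : ℂ)/282429536481) * s ^ 7 + ((15948576480500010040 : ℂ)/282429536481) * s ^ 7 * u + ((-9296713435728628880 : ℂ)/282429536481) * s ^ 8 + ((574843639300480 : ℂ)/10460353203) * s ^ 8 * u + ((-13941904096520960 : ℂ)/3486784401) * s ^ 9 + ((-2755219355850880 : ℂ)/3486784401) * s ^ 9 * u) * hs2 + (((55914015163543549495 : ℂ)/10460353203)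 + ((4277805704458913940740 : ℂ)/282429536481) * u + ((6922222081806847045345 : ℂ)/282429536481) * u ^ 2 + ((226958514512522446000 : ℂ)/10460353203) * u ^ 3 + ((34891857733586201875 : ℂ)/3486784401) * u ^ 4 + ((6440459299123469375 : ℂ)/3486784401) * u ^ 5 + ((-5015198941918290657385 : ℂ)/282429536481) * s + ((-96241055580394613380 : ℂ)/282429536481) * s * u + ((7439190356366774686285 : ℂ)/282429536481) * s * u ^ 2 + ((326060869022164092025 : ℂ)/10460353203) * s * u ^ 3 + ((18068353888896380000 : ℂ)/1162261467) * s * u ^ 4 + ((3374685924370063375 : ℂ)/1162261467) * s * u ^ 5 + ((-7053473883849517295755 : ℂ)/282429536481) * s ^ 2 + ((-6811997535943645739650 : ℂ)/282429536481) * s ^ 2 * u + ((-544021540601047428245 : ℂ)/282429536481) * s ^ 2 * u ^ 2 + ((105872402286921267250 : ℂ)/10460353203) * s ^ 2 * u ^ 3 + ((22305629117483956100 : ℂ)/3486784401) * s ^ 2 * u ^ 4 + ((4236783155343490675 : ℂ)/3486784401) * s ^ 2 * u ^ 5 + ((80120828508440142875 : ℂ)/282429536481) * s ^ 3 + ((-3788533685099226711695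 : ℂ)/282429536481) * s ^ 3 * u + ((-3153787729138351255870 : ℂ)/282429536481) * s ^ 3 * u ^ 2 + ((-55281845207065890880 : ℂ)/10460353203) * s ^ 3 * u ^ 3 + ((-6228200232351674140 : ℂ)/3486784401) * s ^ 3 * u ^ 4 + ((-1156655326457707685 : ℂ)/3486784401) * s ^ 3 * u ^ 5 + ((2902898840907560518765 : ℂ)/282429536481) * s ^ 4 + ((759623991597027742435 : ℂ)/282429536481) * s ^ 4 * u + ((-771797233565692830175 : ℂ)/282429536481) * s ^ 4 * u ^ 2 + ((-40511562503587014640 : ℂ)/10460353203) * s ^ 4 * u ^ 3 + ((-776133144790997735 : ℂ)/387420489) * s ^ 4 * u ^ 4 + ((-148158955944292870 : ℂ)/387420489) * s ^ 4 * u ^ 5 + ((761658418943682926755 : ℂ)/282429536481) * s ^ 5 + ((1004484819285149383735 : ℂ)/282429536481) * s ^ 5 * u + ((372188022064011653045 : ℂ)/282429536481) * s ^ 5 * u ^ 2 + ((-3210575417982685945 : ℂ)/10460353203) * s ^ 5 * u ^ 3 + ((-1221352816070371520 : ℂ)/3486784401) * s ^ 5 * u ^ 4 + ((-237817906134761740 :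 ℂ)/3486784401) * s ^ 5 * u ^ 5 + ((-351525067732505930135 : ℂ)/282429536481) * s ^ 6 + ((129670941025388607935 : ℂ)/282429536481) * s ^ 6 * u + ((166254817998683609695 : ℂ)/282429536481) * s ^ 6 * u ^ 2 + ((2960994251097303070 : ℂ)/10460353203) * s ^ 6 * u ^ 3 + ((343349690588091220 : ℂ)/3486784401) * s ^ 6 * u ^ 4 + ((65961738843885800 : ℂ)/3486784401) * s ^ 6 * u ^ 5 + ((-160898887895282146765 : ℂ)/282429536481) * s ^ 7 + ((-65791584834145869160 : ℂ)/282429536481) * s ^ 7 * u + ((-2590245083159861240 : ℂ)/282429536481) * s ^ 7 * u ^ 2 + ((694099386488530480 : ℂ)/10460353203) * s ^ 7 * u ^ 3 + ((47850950294457040 : ℂ)/1162261467) * s ^ 7 * u ^ 4 + ((9354331343296640 : ℂ)/1162261467) * s ^ 7 * u ^ 5 + ((3005267066004557360 : ℂ)/282429536481) * s ^ 8 + ((-17510785855267459000 : ℂ)/282429536481) * s ^ 8 * u + ((-9296713435728628880 : ℂ)/282429536481) * s ^ 8 * u ^ 2 + ((574843639300480 : ℂ)/10460353203) * s ^ 8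 * u ^ 3 + ((13941904096520960 : ℂ)/3486784401) * s ^ 8 * u ^ 4 + ((2755219355850880 : ℂ)/3486784401) * s ^ 8 * u ^ 5 + ((9296713435728628880 : ℂ)/282429536481) * s ^ 9 + ((-574843639300480 : ℂ)/10460353203) * s ^ 9 * u + ((-13941904096520960 : ℂ)/3486784401) * s ^ 9 * u ^ 2 + ((-2755219355850880 : ℂ)/3486784401) * s ^ 9 * u ^ 3 + ((13941904096520960 : ℂ)/3486784401) * s ^ 10 + ((2755219355850880 : ℂ)/3486784401) * s ^ 10 * u) * hu
  have hc4 : 15 * (a * ((92 : ℂ) + (32 : ℂ) * s)) ^ 2 * (a * ((-44 : ℂ) + (-20 : ℂ) * s + ((22 : ℂ) + (10 : ℂ) * s) * u)) ^ 4 + 18 * 10 * (a * ((92 : ℂ) + (32 : ℂ) * s)) ^ 2 * (a * ((-44 : ℂ) + (-20 : ℂ) * s + ((22 : ℂ) + (10 : ℂ) * s) * u)) ^ 3 * (a * ((-19 : ℂ) + (-7 : ℂ) * s + ((-19 : ℂ) + (-7 : ℂ) * s) * u)) + 18 * 5 * (a * ((92 : ℂ) + (32 : ℂ) * s)) * (a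 * ((-44 : ℂ) + (-20 : ℂ) * s + ((22 : ℂ) + (10 : ℂ) * s) * u)) ^ 4 * (a * ((-8 : ℂ) + (-2 : ℂ) * s + ((-30 : ℂ) + (-12 : ℂ) * s) * u)) + (40 * (1 - 2 * s)) * 3 * (a * ((92 : ℂ) + (32 : ℂ) * s)) ^ 2 * (a * ((-44 : ℂ) + (-20 : ℂ) * s + ((22 : ℂ) + (10 : ℂ) * s) * u)) * (a * ((-19 : ℂ) + (-7 : ℂ) * s + ((-19 : ℂ) + (-7 : ℂ) * s) * u)) ^ 3 + (40 * (1 - 2 * s)) * 9 * (a * ((92 : ℂ) + (32 : ℂ) * s)) * (a * ((-44 : ℂ) + (-20 : ℂ) * s + ((22 : ℂ) + (10 : ℂ) * s) * u)) ^ 2 * (a * ((-8 : ℂ) + (-2 : ℂ) * s + ((-30 : ℂ) + (-12 : ℂ) * s) * u)) * (a * ((-19 : ℂ) + (-7 : ℂ) * s + ((-19 : ℂ) + (-7 : ℂ) * s) * u)) ^ 2 + (40 * (1 - 2 * s)) * 3 * (a * ((-44 : ℂ) + (-20 : ℂ) * s + ((22 : ℂ) + (10 : ℂ) * s) * u)) ^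 3 * (a * ((-8 : ℂ) + (-2 : ℂ) * s + ((-30 : ℂ) + (-12 : ℂ) * s) * u)) ^ 2 * (a * ((-19 : ℂ) + (-7 : ℂ) * s + ((-19 : ℂ) + (-7 : ℂ) * s) * u)) + (32 * (115 - 41 * s)) * 15 * (a * ((-8 : ℂ) + (-2 : ℂ) * s + ((-30 : ℂ) + (-12 : ℂ) * s) * u)) ^ 2 * (a * ((-19 : ℂ) + (-7 : ℂ) * s + ((-19 : ℂ) + (-7 : ℂ) * s) * u)) ^ 4 = -150 := by
    linear_combination ((3287572170240 : ℂ) + (2649204192000 : ℂ) * u + (23425864859520 : ℂ) * u ^ 2 + (48798285588480 : ℂ) * u ^ 3 + (53363200247040 : ℂ) * u ^ 4 + (29216174688000 : ℂ) * u ^ 5 + (6452497584000 : ℂ) * u ^ 6 + (7363259750400 : ℂ) * s + (2416551601920 : ℂ) * s * u + (42421394067840 : ℂ) * s * u ^ 2 + (89216341255680 : ℂ) * s * u ^ 3 + (100148666346240 : ℂ) * s * u ^ 4 + (55587489926400 : ℂ) * s * u ^ 5 + (12400750339200 : ℂ) * s * u ^ 6 + (6786754611840 : ℂ) * s ^ 2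 + (-1271743269120 : ℂ) * s ^ 2 * u + (28108106265600 : ℂ) * s ^ 2 * u ^ 2 + (58427861172480 : ℂ) * s ^ 2 * u ^ 3 + (68362718325120 : ℂ) * s ^ 2 * u ^ 4 + (38648528282880 : ℂ) * s ^ 2 * u ^ 5 + (8745683063040 : ℂ) * s ^ 2 * u ^ 6 + (3240864666240 : ℂ) * s ^ 3 + (-2593072727040 : ℂ) * s ^ 3 * u + (6393492472320 : ℂ) * s ^ 3 * u ^ 2 + (11427793152000 : ℂ) * s ^ 3 * u ^ 3 + (15428229325440 : ℂ) * s ^ 3 * u ^ 4 + (9138665064960 : ℂ) * s ^ 3 * u ^ 5 + (2153237541120 : ℂ) * s ^ 3 * u ^ 6 + (807948122880 : ℂ) * s ^ 4 + (-1384869315840 : ℂ) * s ^ 4 * u + (-1412001060480 : ℂ) * s ^ 4 * u ^ 2 + (-4700905244160 : ℂ) * s ^ 4 * u ^ 3 + (-4301653816320 : ℂ) * s ^ 4 * u ^ 4 + (-2236214995200 : ℂ) * s ^ 4 * u ^ 5 + (-455772977280 : ℂ) * s ^ 4 * u ^ 6 + (81233936640 : ℂ) * s ^ 5 + (-344937726720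 : ℂ) * s ^ 5 * u + (-1095790861440 : ℂ) * s ^ 5 * u ^ 2 + (-2984052718080 : ℂ) * s ^ 5 * u ^ 3 + (-3203121715200 : ℂ) * s ^ 5 * u ^ 4 + (-1784536116480 : ℂ) * s ^ 5 * u ^ 5 + (-391146641280 : ℂ) * s ^ 5 * u ^ 6 + (-3733664640 : ℂ) * s ^ 6 + (-39739004160 : ℂ) * s ^ 6 * u + (-225263105280 : ℂ) * s ^ 6 * u ^ 2 + (-601744208640 : ℂ) * s ^ 6 * u ^ 3 + (-675397530240 : ℂ) * s ^ 6 * u ^ 4 + (-384149502720 : ℂ) * s ^ 6 * u ^ 5 + (-85468815360 : ℂ) * s ^ 6 * u ^ 6 + (-1025512320 : ℂ) * s ^ 7 + (-1534955520 : ℂ) * s ^ 7 * u + (-16370323200 : ℂ) * s ^ 7 * u ^ 2 + (-43836441600 : ℂ) * s ^ 7 * u ^ 3 + (-50672496000 : ℂ) * s ^ 7 * u ^ 4 + (-29259256320 : ℂ) * s ^ 7 * u ^ 5 + (-6562321920 : ℂ) * s ^ 7 * u ^ 6) * ha + (((-9775633486431397660 : ℂ)/94143178827) + ((-4624757220274221580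 : ℂ)/31381059609) * u + ((56289564059564837800 : ℂ)/94143178827) * s + ((689840963083920532045 : ℂ)/376572715308) * s * u + ((-105730717329406123865 : ℂ)/62762119218) * s ^ 2 + ((84670316782598403650 : ℂ)/94143178827) * s ^ 2 * u + ((-256485482742562145720 : ℂ)/94143178827) * s ^ 3 + ((-188528355590388308795 : ℂ)/125524238436) * s ^ 3 * u + ((-125527086499455205985 : ℂ)/188286357654) * s ^ 4 + ((-115271695907441244535 : ℂ)/94143178827) * s ^ 4 * u + ((15512871025888296925 : ℂ)/31381059609) * s ^ 5 + ((-45884832435045997145 : ℂ)/376572715308) * s ^ 5 * u + ((22971955273134463610 : ℂ)/94143178827) * s ^ 6 + ((4004157705378944405 : ℂ)/31381059609) * s ^ 6 * u + ((111552617830775515 : ℂ)/94143178827) * s ^ 7 + ((14334830775882911725 : ℂ)/376572715308) * s ^ 7 * u + ((-468646128861684235 : ℂ)/31381059609) * s ^ 8 + ((146049197793593450 : ℂ)/94143178827) * s ^ 8 * u + ((-21426091497673660 : ℂ)/10460353203) * s ^ 9 + ((-390992372267420 : ℂ)/1162261467) * s ^ 9 * u) * hs2 + (((521426187174384362360 :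 ℂ)/94143178827) + ((5259328620319122214495 : ℂ)/376572715308) * u + ((577940111931425305985 : ℂ)/31381059609) * u ^ 2 + ((2578996025879448941935 : ℂ)/188286357654) * u ^ 3 + ((56372994023948373250 : ℂ)/10460353203) * u ^ 4 + ((4068624556153051375 : ℂ)/4649045868) * u ^ 5 + ((-1017061497491948093515 : ℂ)/94143178827) * s + ((2448824570783423293985 : ℂ)/376572715308) * s * u + ((687014771184520409570 : ℂ)/31381059609) * s * u ^ 2 + ((7464074602400628365435 : ℂ)/376572715308) * s * u ^ 3 + ((86236705636888155100 : ℂ)/10460353203) * s * u ^ 4 + ((77549405283233725 : ℂ)/57395628) * s * u ^ 5 + ((-3675246546891982869245 : ℂ)/188286357654) * s ^ 2 + ((-4790299450835044627555 : ℂ)/376572715308) * s ^ 2 * u + ((58134056755696034075 : ℂ)/31381059609) * s ^ 2 * u ^ 2 + ((1259016871694335892005 : ℂ)/188286357654) * s ^ 2 * u ^ 3 + ((68821719065726977715 : ℂ)/20920706406) * s ^ 2 * u ^ 4 + ((1279588419046513735 : ℂ)/2324522934) * s ^ 2 * u ^ 5 + ((-289428063172275783875 : ℂ)/94143178827) * s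 ^ 3 + ((-603547884110907480745 : ℂ)/62762119218) * s ^ 3 * u + ((-220815915549901970570 : ℂ)/31381059609) * s ^ 3 * u ^ 2 + ((-1194351083975904423005 : ℂ)/376572715308) * s ^ 3 * u ^ 3 + ((-10424235007207160710 : ℂ)/10460353203) * s ^ 3 * u ^ 4 + ((-363297868095698675 : ℂ)/2324522934) * s ^ 3 * u ^ 5 + ((577590358832025630760 : ℂ)/94143178827) * s ^ 4 + ((61951093758507234310 : ℂ)/94143178827) * s ^ 4 * u + ((-77423760465316852085 : ℂ)/31381059609) * s ^ 4 * u ^ 2 + ((-466224217306908035305 : ℂ)/188286357654) * s ^ 4 * u ^ 3 + ((-11009344195085635630 : ℂ)/10460353203) * s ^ 4 * u ^ 4 + ((-266853164855182915 : ℂ)/1549681956) * s ^ 4 * u ^ 5 + ((222850434310869013840 : ℂ)/94143178827) * s ^ 5 + ((803223298238044597765 : ℂ)/376572715308) * s ^ 5 * u + ((16946340952875487255 : ℂ)/31381059609) * s ^ 5 * u ^ 2 + ((-93918741413590108835 : ℂ)/376572715308) * s ^ 5 * u ^ 3 + ((-1838870144603659405 : ℂ)/10460353203) * s ^ 5 *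 u ^ 4 + ((-138015267516348395 : ℂ)/4649045868) * s ^ 5 * u ^ 5 + ((-91499433963297520805 : ℂ)/188286357654) * s ^ 6 + ((49123694188897423715 : ℂ)/125524238436) * s ^ 6 * u + ((11469694273114995800 : ℂ)/31381059609) * s ^ 6 * u ^ 2 + ((31345609989455018065 : ℂ)/188286357654) * s ^ 6 * u ^ 3 + ((1112331248724834245 : ℂ)/20920706406) * s ^ 6 * u ^ 4 + ((9831969494724235 : ℂ)/1162261467) * s ^ 6 * u ^ 5 + ((-32805456099273673375 : ℂ)/94143178827) * s ^ 7 + ((-10973103756458524150 : ℂ)/94143178827) * s ^ 7 * u + ((532530780155214305 : ℂ)/31381059609) * s ^ 7 * u ^ 2 + ((16917095334420510485 : ℂ)/376572715308) * s ^ 7 * u ^ 3 + ((224016258061424395 : ℂ)/10460353203) * s ^ 7 * u ^ 4 + ((1352627893231415 : ℂ)/387420489) * s ^ 7 * u ^ 5 + ((-1461396382184216095 : ℂ)/94143178827) * s ^ 8 + ((-15221601476185420285 : ℂ)/376572715308) * s ^ 8 * u + ((-468646128861684235 : ℂ)/31381059609) * s ^ 8 * u ^ 2 + ((146049197793593450 :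 ℂ)/94143178827) * s ^ 8 * u ^ 3 + ((21426091497673660 : ℂ)/10460353203) * s ^ 8 * u ^ 4 + ((390992372267420 : ℂ)/1162261467) * s ^ 8 * u ^ 5 + ((468646128861684235 : ℂ)/31381059609) * s ^ 9 + ((-146049197793593450 : ℂ)/94143178827) * s ^ 9 * u + ((-21426091497673660 : ℂ)/10460353203) * s ^ 9 * u ^ 2 + ((-390992372267420 : ℂ)/1162261467) * s ^ 9 * u ^ 3 + ((21426091497673660 : ℂ)/10460353203) * s ^ 10 + ((390992372267420 : ℂ)/1162261467) * s ^ 10 * u) * hu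
  have hc5 : 6 * (a * ((92 : ℂ) + (32 : ℂ) * s)) * (a * ((-44 : ℂ) + (-20 : ℂ) * s + ((22 : ℂ) + (10 : ℂ) * s) * u)) ^ 5 + 18 * 5 * (a * ((92 : ℂ) + (32 : ℂ) * s)) * (a * ((-44 : ℂ) + (-20 : ℂ) * s + ((22 : ℂ) + (10 : ℂ) * s) * u)) ^ 4 * (a * ((-19 : ℂ) + (-7 : ℂ) * s + ((-19 : ℂ) + (-7 : ℂ) * s) * u)) + 18 * (a * ((-44 : ℂ) + (-20 : ℂ) * s + ((22 : ℂ) + (10 : ℂ) * s) * u)) ^ 5 * (a * ((-8 : ℂ) + (-2 : ℂ) * s + ((-30 : ℂ) + (-12 : ℂ) * s) * u)) + (40 * (1 - 2 * s)) * 3 * (a * ((92 : ℂ) + (32 : ℂ) * s)) * (a * ((-44 : ℂ) + (-20 : ℂ) * s + ((22 : ℂ) + (10 : ℂ) * s) * u)) ^ 2 * (a * ((-19 : ℂ) + (-7 : ℂ) * s + ((-19 : ℂ) + (-7 : ℂ) * s) * u)) ^ 3 + (40 * (1 - 2 * s)) * 3 * (a * ((-44 : ℂ) + (-20 : ℂ)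 * s + ((22 : ℂ) + (10 : ℂ) * s) * u)) ^ 3 * (a * ((-8 : ℂ) + (-2 : ℂ) * s + ((-30 : ℂ) + (-12 : ℂ) * s) * u)) * (a * ((-19 : ℂ) + (-7 : ℂ) * s + ((-19 : ℂ) + (-7 : ℂ) * s) * u)) ^ 2 + (32 * (115 - 41 * s)) * 6 * (a * ((-8 : ℂ) + (-2 : ℂ) * s + ((-30 : ℂ) + (-12 : ℂ) * s) * u)) * (a * ((-19 : ℂ) + (-7 : ℂ) * s + ((-19 : ℂ) + (-7 : ℂ) * s) * u)) ^ 5 = -48 := by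
    linear_combination ((-336637212672 : ℂ) + (4506243346560 : ℂ) * u + (12460395690240 : ℂ) * u ^ 2 + (20533733715840 : ℂ) * u ^ 3 + (18751769869440 : ℂ) * u ^ 4 + (8646309442176 : ℂ) * u ^ 5 + (1623546875520 : ℂ) * u ^ 6 + (-956719344768 : ℂ) * s + (9021661793664 : ℂ) * s * u + (22761469626240 : ℂ) * s * u ^ 2 + (37837551406080 : ℂ) * s * u ^ 3 + (35034250214400 : ℂ) * s * u ^ 4 + (16222172400768 : ℂ) * s * u ^ 5 + (3078309927168 : ℂ) * s * u ^ 6 + (-1021760476416 : ℂ) * s ^ 2 + (7204933252224 : ℂ) * s ^ 2 * u + (14982778120320 : ℂ) * s ^ 2 * u ^ 2 + (25161098878080 : ℂ) * s ^ 2 * u ^ 3 + (23786908588800 : ℂ) * s ^ 2 * u ^ 4 + (11042265734784 : ℂ) * s ^ 2 * u ^ 5 + (2148665491584 : ℂ) * s ^ 2 * u ^ 6 + (-512960910720 : ℂ) * s ^ 3 + (2773303751040 : ℂ) * s ^ 3 * u + (3067290612480 : ℂ) * s ^ 3 * u ^ 2 + (5259044812800 : ℂ) * s ^ 3 * u ^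 3 + (5309108499840 : ℂ) * s ^ 3 * u ^ 4 + (2441848010880 : ℂ) * s ^ 3 * u ^ 5 + (533260005120 : ℂ) * s ^ 3 * u ^ 6 + (-108251696640 : ℂ) * s ^ 4 + (423252888960 : ℂ) * s ^ 4 * u + (-1086104755200 : ℂ) * s ^ 4 * u ^ 2 + (-1799698362240 : ℂ) * s ^ 4 * u ^ 3 + (-1515026497920 : ℂ) * s ^ 4 * u ^ 4 + (-740737810560 : ℂ) * s ^ 4 * u ^ 5 + (-98717374080 : ℂ) * s ^ 4 * u ^ 6 + (3581642880 : ℂ) * s ^ 5 + (-38696711040 : ℂ) * s ^ 5 * u + (-720064218240 : ℂ) * s ^ 5 * u ^ 2 + (-1219512499200 : ℂ) * s ^ 5 * u ^ 3 + (-1112074133760 : ℂ) * s ^ 5 * u ^ 4 + (-536069750400 : ℂ) * s ^ 5 * u ^ 5 + (-88194251520 : ℂ) * s ^ 5 * u ^ 6 + (5164862208 : ℂ) * s ^ 6 + (-21295616640 : ℂ) * s ^ 6 * u + (-146087310720 : ℂ) * s ^ 6 * u ^ 2 + (-250060782720 : ℂ) * s ^ 6 * u ^ 3 + (-233183823360 :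 ℂ) * s ^ 6 * u ^ 4 + (-112814884992 : ℂ) * s ^ 6 * u ^ 5 + (-19104612480 : ℂ) * s ^ 6 * u ^ 6 + (600926592 : ℂ) * s ^ 7 + (-2026351488 : ℂ) * s ^ 7 * u + (-10650232320 : ℂ) * s ^ 7 * u ^ 2 + (-18405058560 : ℂ) * s ^ 7 * u ^ 3 + (-17415995520 : ℂ) * s ^ 7 * u ^ 4 + (-8480427648 : ℂ) * s ^ 7 * u ^ 5 + (-1446536448 : ℂ) * s ^ 7 * u ^ 6) * ha + (((1000993753793669800 : ℂ)/94143178827) + ((-25570612299014395261 : ℂ)/188286357654) * u + ((190949597273525140229 : ℂ)/376572715308) * s + ((254150860390490681869 : ℂ)/376572715308) * s * u + ((-24081018537120343736 : ℂ)/94143178827) * s ^ 2 + ((101078749671603955205 : ℂ)/188286357654) * s ^ 2 * u + ((-337094488741154925593 : ℂ)/376572715308) * s ^ 3 + ((-33447086345387690707 : ℂ)/94143178827) * s ^ 3 * u + ((-126115845259928585567 : ℂ)/376572715308) * s ^ 4 + ((-37795115648244539779 : ℂ)/94143178827) * s ^ 4 * u + ((42400804009594291559 : ℂ)/376572715308)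 * s ^ 5 + ((-23858541410929611211 : ℂ)/376572715308) * s ^ 5 * u + ((15188021791493020345 : ℂ)/188286357654) * s ^ 6 + ((6614959631290078121 : ℂ)/188286357654) * s ^ 6 * u + ((2165063442179848361 : ℂ)/376572715308) * s ^ 7 + ((2374498892526786029 : ℂ)/188286357654) * s ^ 7 * u + ((-1322090887819425083 : ℂ)/376572715308) * s ^ 8 + ((154075706105305553 : ℂ)/188286357654) * s ^ 8 * u + ((-52307489040383101 : ℂ)/94143178827) * s ^ 9 + ((-775680089826082 : ℂ)/10460353203) * s ^ 9 * u) * hs2 + (((1267585880439426003085 : ℂ)/376572715308) + ((65167035521603545075 : ℂ)/10460353203) * u + ((2609992322322426934325 : ℂ)/376572715308) * u ^ 2 + ((1677615781386520631767 : ℂ)/376572715308) * u ^ 3 + ((576780361516034241043 : ℂ)/376572715308) * u ^ 4 + ((9213552333544910965 : ℂ)/41841412812) * u ^ 5 + ((-183308960533527201457 : ℂ)/94143178827) * s + ((437124332128024797542 : ℂ)/94143178827) * s * u + ((3286164457226732257777 : ℂ)/376572715308) * s * u ^ 2 + ((2422988949483598376677 : ℂ)/376572715308) * s * u ^ 3 +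 ((866832980851056531721 : ℂ)/376572715308) * s * u ^ 4 + ((6993434468339007743 : ℂ)/20920706406) * s * u ^ 5 + ((-426860969888655609281 : ℂ)/62762119218) * s ^ 2 + ((-596486635560995183381 : ℂ)/188286357654) * s ^ 2 * u + ((141451305332983644181 : ℂ)/94143178827) * s ^ 2 * u ^ 2 + ((410790051486878433071 : ℂ)/188286357654) * s ^ 2 * u ^ 3 + ((332844037234041526111 : ℂ)/376572715308) * s ^ 2 * u ^ 4 + ((5590814534768185105 : ℂ)/41841412812) * s ^ 2 * u ^ 5 + ((-779357492123930504825 : ℂ)/376572715308) * s ^ 3 + ((-327020037491483867113 : ℂ)/94143178827) * s ^ 3 * u + ((-285491706685654583867 : ℂ)/125524238436) * s ^ 3 * u ^ 2 + ((-95632423078895329414 : ℂ)/94143178827) * s ^ 3 * u ^ 3 + ((-111665036930972544727 : ℂ)/376572715308) * s ^ 3 * u ^ 4 + ((-791256478615273667 : ℂ)/20920706406) * s ^ 3 * u ^ 5 + ((159401214100570705244 : ℂ)/94143178827) * s ^ 4 + ((-23744907358836285097 : ℂ)/188286357654) * s ^ 4 * u + ((-187492775374899824609 : ℂ)/188286357654)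 * s ^ 4 * u ^ 2 + ((-304140056599459781479 : ℂ)/376572715308) * s ^ 4 * u ^ 3 + ((-109971252495363763315 : ℂ)/376572715308) * s ^ 4 * u ^ 4 + ((-1704022193381835805 : ℂ)/41841412812) * s ^ 4 * u ^ 5 + ((113021819476345219651 : ℂ)/125524238436) * s ^ 5 + ((121714623371278973147 : ℂ)/188286357654) * s ^ 5 * u + ((37513699795069336835 : ℂ)/376572715308) * s ^ 5 * u ^ 2 + ((-33538092302899877815 : ℂ)/376572715308) * s ^ 5 * u ^ 3 + ((-17316453242432872405 : ℂ)/376572715308) * s ^ 5 * u ^ 4 + ((-144378158900501105 : ℂ)/20920706406) * s ^ 5 * u ^ 5 + ((-13678929592939137875 : ℂ)/188286357654) * s ^ 6 + ((28766973955993467125 : ℂ)/188286357654) * s ^ 6 * u + ((3638970698124249395 : ℂ)/31381059609) * s ^ 6 * u ^ 2 + ((4908392627098716544 : ℂ)/94143178827) * s ^ 6 * u ^ 3 + ((5771258447741702269 : ℂ)/376572715308) * s ^ 6 * u ^ 4 + ((80752773634703935 : ℂ)/41841412812) * s ^ 6 * u ^ 5 + ((-39649590164812369079 : ℂ)/376572715308)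 * s ^ 7 + ((-2755173320443613974 : ℂ)/94143178827) * s ^ 7 * u + ((4003939346997545281 : ℂ)/376572715308) * s ^ 7 * u ^ 2 + ((2864624083694765921 : ℂ)/188286357654) * s ^ 7 * u ^ 3 + ((2225447458629598003 : ℂ)/376572715308) * s ^ 7 * u ^ 4 + ((16384521171820157 : ℂ)/20920706406) * s ^ 7 * u ^ 5 + ((-1209891045103525063 : ℂ)/125524238436) * s ^ 8 + ((-2472234583844872361 : ℂ)/188286357654) * s ^ 8 * u + ((-1322090887819425083 : ℂ)/376572715308) * s ^ 8 * u ^ 2 + ((154075706105305553 : ℂ)/188286357654) * s ^ 8 * u ^ 3 + ((52307489040383101 : ℂ)/94143178827) * s ^ 8 * u ^ 4 + ((775680089826082 : ℂ)/10460353203) * s ^ 8 * u ^ 5 + ((1322090887819425083 : ℂ)/376572715308) * s ^ 9 + ((-154075706105305553 : ℂ)/188286357654) * s ^ 9 * u + ((-52307489040383101 : ℂ)/94143178827) * s ^ 9 * u ^ 2 + ((-775680089826082 : ℂ)/10460353203) * s ^ 9 * u ^ 3 + ((52307489040383101 : ℂ)/94143178827) * s ^ 10 + ((775680089826082 : ℂ)/10460353203)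 * s ^ 10 * u) * hu
  have hc6 : (a * ((-44 : ℂ) + (-20 : ℂ) * s + ((22 : ℂ) + (10 : ℂ) * s) * u)) ^ 6 + 18 * (a * ((-44 : ℂ) + (-20 : ℂ) * s + ((22 : ℂ) + (10 : ℂ) * s) * u)) ^ 5 * (a * ((-19 : ℂ) + (-7 : ℂ) * s + ((-19 : ℂ) + (-7 : ℂ) * s) * u)) + (40 * (1 - 2 * s)) * (a * ((-44 : ℂ) + (-20 : ℂ) * s + ((22 : ℂ) + (10 : ℂ) * s) * u)) ^ 3 * (a * ((-19 : ℂ) + (-7 : ℂ) * s + ((-19 : ℂ) + (-7 : ℂ) * s) * u)) ^ 3 + (32 * (115 - 41 * s)) * (a * ((-19 : ℂ) + (-7 : ℂ) * s + ((-19 : ℂ) + (-7 : ℂ) * s) * u)) ^ 6 = 23 := by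
    linear_combination ((260157586784 : ℂ) + (967458711360 : ℂ) * u + (2606615496480 : ℂ) * u ^ 2 + (3482802504640 : ℂ) * u ^ 3 + (2559623316960 : ℂ) * u ^ 4 + (1062039528768 : ℂ) * u ^ 5 + (168558294560 : ℂ) * u ^ 6 + (500694629152 : ℂ) * s + (1659511695552 : ℂ) * s * u + (4880718267360 : ℂ) * s * u ^ 2 + (6541295655680 : ℂ) * s * u ^ 3 + (4697733510240 : ℂ) * s * u ^ 4 + (1968185103936 : ℂ) * s * u ^ 5 + (315265912096 : ℂ) * s * u ^ 6 + (346121194464 : ℂ) * s ^ 2 + (898931801664 : ℂ) * s ^ 2 * u + (3367202171040 : ℂ) * s ^ 2 * u ^ 2 + (4546701120960 : ℂ) * s ^ 2 * u ^ 3 + (3087234004320 : ℂ) * s ^ 2 * u ^ 4 + (1317070545984 : ℂ) * s ^ 2 * u ^ 5 + (218305034784 : ℂ) * s ^ 2 * u ^ 6 + (70911498400 : ℂ) * s ^ 3 + (-28997106240 : ℂ) * s ^ 3 * u + (827931377760 : ℂ) * s ^ 3 * u ^ 2 + (1153853288960 : ℂ) * s ^ 3 * u ^ 3 + (602825341920 :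 ℂ) * s ^ 3 * u ^ 4 + (277025985600 : ℂ) * s ^ 3 * u ^ 5 + (55461790240 : ℂ) * s ^ 3 * u ^ 6 + (-32473999840 : ℂ) * s ^ 4 + (-226775584320 : ℂ) * s ^ 4 * u + (-149806546080 : ℂ) * s ^ 4 * u ^ 2 + (-174603826880 : ℂ) * s ^ 4 * u ^ 3 + (-254089649760 : ℂ) * s ^ 4 * u ^ 4 + (-95869400640 : ℂ) * s ^ 4 * u ^ 5 + (-7953216160 : ℂ) * s ^ 4 * u ^ 6 + (-21851310240 : ℂ) * s ^ 5 + (-98198792640 : ℂ) * s ^ 5 * u + (-133272712800 : ℂ) * s ^ 5 * u ^ 2 + (-170288928000 : ℂ) * s ^ 5 * u ^ 3 + (-161328780000 : ℂ) * s ^ 5 * u ^ 4 + (-65477125440 : ℂ) * s ^ 5 * u ^ 5 + (-7889243040 : ℂ) * s ^ 5 * u ^ 6 + (-4740233056 : ℂ) * s ^ 6 + (-17971734336 : ℂ) * s ^ 6 * u + (-28627671840 : ℂ) * s ^ 6 * u ^ 2 + (-36973757120 : ℂ) * s ^ 6 * u ^ 3 + (-32703087840 : ℂ) * s ^ 6 *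 u ^ 4 + (-13556118336 : ℂ) * s ^ 6 * u ^ 5 + (-1701617056 : ℂ) * s ^ 6 * u ^ 6 + (-373875488 : ℂ) * s ^ 7 + (-1255412928 : ℂ) * s ^ 7 * u + (-2150692320 : ℂ) * s ^ 7 * u ^ 2 + (-2785269760 : ℂ) * s ^ 7 * u ^ 3 + (-2397652320 : ℂ) * s ^ 7 * u ^ 4 + (-1008452928 : ℂ) * s ^ 7 * u ^ 5 + (-126915488 : ℂ) * s ^ 7 * u ^ 6) * ha + (((-18565946250816598237 : ℂ)/2259436291848) + ((-160862416752069855427 : ℂ)/4518872583696) * u + ((199658365384739993621 : ℂ)/2259436291848) * s + ((42118563917607958793 : ℂ)/376572715308) * s * u + ((-398378722552987883 : ℂ)/62762119218) * s ^ 2 + ((79454086512438052843 : ℂ)/564859072962) * s ^ 2 * u + ((-94360554072516664735 : ℂ)/753145430616) * s ^ 3 + ((3995493029125047215 : ℂ)/753145430616) * s ^ 3 * u + ((-143574702885851474423 : ℂ)/2259436291848) * s ^ 4 + ((-3486644298560897383 : ℂ)/94143178827) * s ^ 4 * u + ((4970409754850019317 : ℂ)/753145430616) * s ^ 5 + ((-8014870347891726239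 : ℂ)/1129718145924) * s ^ 5 * u + ((1896245538562830523 : ℂ)/188286357654) * s ^ 6 + ((1659167242098078281 : ℂ)/376572715308) * s ^ 6 * u + ((2799844316171747225 : ℂ)/2259436291848) * s ^ 7 + ((426520300899320393 : ℂ)/251048476872) * s ^ 7 * u + ((-30987030427257242 : ℂ)/94143178827) * s ^ 8 + ((619840374430243439 : ℂ)/4518872583696) * s ^ 8 * u + ((-17596062973934438 : ℂ)/282429536481) * s ^ 9 + ((-7350072834302611 : ℂ)/1129718145924) * s ^ 9 * u) * hs2 + (((22202910741807670595 : ℂ)/31381059609) + ((5077248158245624780615 : ℂ)/4518872583696) * u + ((586488842565925653685 : ℂ)/564859072962) * u ^ 2 + ((292207052276561556793 : ℂ)/502096953744) * u ^ 3 + ((51207823523366600543 : ℂ)/282429536481) * u ^ 4 + ((103308524498189510035 : ℂ)/4518872583696) * u ^ 5 + ((-864477008310995461 : ℂ)/564859072962) * s + ((311118170902565538088 : ℂ)/282429536481) * s * u + ((1018321678599953919517 : ℂ)/753145430616) * s * u ^ 2 + ((1874163302843889641635 : ℂ)/2259436291848) * s * u ^ 3 + ((151449615837815133247 : ℂ)/564859072962)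 * s * u ^ 4 + ((154177927790478517951 : ℂ)/4518872583696) * s * u ^ 5 + ((-737052679628546218549 : ℂ)/753145430616) * s ^ 2 + ((-742759978447538409535 : ℂ)/4518872583696) * s ^ 2 * u + ((1057270263497147024 : ℂ)/3486784401) * s ^ 2 * u ^ 2 + ((611190416778883442641 : ℂ)/2259436291848) * s ^ 2 * u ^ 3 + ((56293412156970338623 : ℂ)/564859072962) * s ^ 2 * u ^ 4 + ((60765909654593889751 : ℂ)/4518872583696) * s ^ 2 * u ^ 5 + ((-14170730761246172924 : ℂ)/31381059609) * s ^ 3 + ((-686365516518000386119 : ℂ)/1506290861232) * s ^ 3 * u + ((-679971392060893064717 : ℂ)/2259436291848) * s ^ 3 * u ^ 2 + ((-313521963228869040029 : ℂ)/2259436291848) * s ^ 3 * u ^ 3 + ((-20292534717097202353 : ℂ)/564859072962) * s ^ 3 * u ^ 4 + ((-16578659063120171977 : ℂ)/4518872583696) * s ^ 3 * u ^ 5 + ((382675932572000878517 : ℂ)/2259436291848) * s ^ 4 + ((-29637070938675408653 : ℂ)/502096953744) * s ^ 4 * u + ((-28894534582854633539 : ℂ)/188286357654) * s ^ 4 * u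 ^ 2 + ((-59899049304688946341 : ℂ)/564859072962) * s ^ 4 * u ^ 3 + ((-9488837658201659075 : ℂ)/282429536481) * s ^ 4 * u ^ 4 + ((-17722348789566893755 : ℂ)/4518872583696) * s ^ 4 * u ^ 5 + ((25384761416009600579 : ℂ)/188286357654) * s ^ 5 + ((328012304887999944283 : ℂ)/4518872583696) * s ^ 5 * u + ((3777743849022979295 : ℂ)/753145430616) * s ^ 5 * u ^ 2 + ((-25755153746065627165 : ℂ)/2259436291848) * s ^ 5 * u ^ 3 + ((-2850128039007918625 : ℂ)/564859072962) * s ^ 5 * u ^ 4 + ((-2992894592229480235 : ℂ)/4518872583696) * s ^ 5 * u ^ 5 + ((1798641600241967449 : ℂ)/753145430616) * s ^ 6 + ((30734086147119407645 : ℂ)/1506290861232) * s ^ 6 * u + ((4239741046578841120 : ℂ)/282429536481) * s ^ 6 * u ^ 2 + ((15751693367793083243 : ℂ)/2259436291848) * s ^ 6 * u ^ 3 + ((1017318510068172445 : ℂ)/564859072962) * s ^ 6 * u ^ 4 + ((784650481243188229 : ℂ)/4518872583696) * s ^ 6 * u ^ 5 + ((-3486271920531714220 : ℂ)/282429536481)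 * s ^ 7 + ((-5003480274995861597 : ℂ)/1506290861232) * s ^ 7 * u + ((53539633591217465 : ℂ)/27894275208) * s ^ 7 * u ^ 2 + ((4716582954351136861 : ℂ)/2259436291848) * s ^ 7 * u ^ 3 + ((379750457072702707 : ℂ)/564859072962) * s ^ 7 * u ^ 4 + ((316398002469103285 : ℂ)/4518872583696) * s ^ 7 * u ^ 5 + ((-420580426968008417 : ℂ)/251048476872) * s ^ 8 + ((-3941583727774120091 : ℂ)/2259436291848) * s ^ 8 * u + ((-30987030427257242 : ℂ)/94143178827) * s ^ 8 * u ^ 2 + ((619840374430243439 : ℂ)/4518872583696) * s ^ 8 * u ^ 3 + ((17596062973934438 : ℂ)/282429536481) * s ^ 8 * u ^ 4 + ((7350072834302611 : ℂ)/1129718145924) * s ^ 8 * u ^ 5 + ((30987030427257242 : ℂ)/94143178827) * s ^ 9 + ((-619840374430243439 : ℂ)/4518872583696) * s ^ 9 * u + ((-17596062973934438 : ℂ)/282429536481) * s ^ 9 * u ^ 2 + ((-7350072834302611 : ℂ)/1129718145924) * s ^ 9 * u ^ 3 + ((17596062973934438 : ℂ)/282429536481) * s ^ 10 + ((7350072834302611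 : ℂ)/1129718145924) * s ^ 10 * u) * hu
  have hk0 : A ^ 6 + 18 * A ^ 5 * C + (40 * (1 - 2 * s)) * A ^ 3 * C ^ 3 + (32 * (115 - 41 * s)) * C ^ 6 = 184 := by
      simp only [hA, hB, hC, hD]; exact hc0
  have hk1 : 6 * A ^ 5 * B + 18 * A ^ 5 * D + 18 * 5 * A ^ 4 * B * C + (40 * (1 - 2 * s)) * 3 * A ^ 3 * C ^ 2 * D + (40 * (1 - 2 * s)) * 3 * A ^ 2 * B * C ^ 3 + (32 * (115 - 41 * s)) * 6 * C ^ 5 * D = -192 := by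
      simp only [hA, hB, hC, hD]; exact hc1
  have hk2 : 15 * A ^ 4 * B ^ 2 + 18 * 5 * A ^ 4 * B * D + 18 * 10 * A ^ 3 * B ^ 2 * C + (40 * (1 - 2 * s)) * 3 * A ^ 3 * C * D ^ 2 + (40 * (1 - 2 * s)) * 9 * A ^ 2 * B * C ^ 2 * D + (40 * (1 - 2 * s)) * 3 * A * B ^ 2 * C ^ 3 + (32 * (115 - 41 * s)) * 15 * C ^ 4 * D ^ 2 = -300 := by
      simp only [hA, hB, hC, hD]; exact hc2
  have hk3 : 20 * A ^ 3 * B ^ 3 + 18 * 10 * A ^ 3 * B ^ 2 * D + 18 * 10 * A ^ 2 * B ^ 3 * C + (40 * (1 - 2 * s)) * A ^ 3 * D ^ 3 + (40 * (1 - 2 * s)) * 9 * A ^ 2 * B * C * D ^ 2 + (40 * (1 - 2 * s)) * 9 * A * B ^ 2 * C ^ 2 * D + (40 * (1 - 2 * s)) * B ^ 3 * C ^ 3 + (32 * (115 - 41 * s)) * 20 * C ^ 3 * D ^ 3 = -320 := by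
      simp only [hA, hB, hC, hD]; exact hc3
  have hk4 : 15 * A ^ 2 * B ^ 4 + 18 * 10 * A ^ 2 * B ^ 3 * D + 18 * 5 * A * B ^ 4 * C + (40 * (1 - 2 * s)) * 3 * A ^ 2 * B * D ^ 3 + (40 * (1 - 2 * s)) * 9 * A * B ^ 2 * C * D ^ 2 + (40 * (1 - 2 * s)) * 3 * B ^ 3 * C ^ 2 * D + (32 * (115 - 41 * s)) * 15 * C ^ 2 * D ^ 4 = -150 := by
      simp only [hA, hB, hC, hD]; exact hc4
  have hk5 : 6 * A * B ^ 5 + 18 * 5 * A * B ^ 4 * D + 18 * B ^ 5 * C + (40 * (1 - 2 * s)) * 3 * A * B ^ 2 * D ^ 3 + (40 * (1 - 2 * s)) * 3 * B ^ 3 * C * D ^ 2 + (32 * (115 - 41 * s)) * 6 * C * D ^ 5 = -48 := by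
      simp only [hA, hB, hC, hD]; exact hc5
  have hk6 : B ^ 6 + 18 * B ^ 5 * D + (40 * (1 - 2 * s)) * B ^ 3 * D ^ 3 + (32 * (115 - 41 * s)) * D ^ 6 = 23 := by
      simp only [hA, hB, hC, hD]; exact hc6
  refine ⟨!![A, B; C, D], ?_, ?_⟩
  · rw [Matrix.det_fin_two_of, hA, hB, hC, hD]
    apply IsUnit.of_mul_eq_one (a ^ 4 * ((126472320 : ℂ) + (47799936 : ℂ)*s + (16181856 : ℂ)*u + ((42822432 : ℂ)/7)*s*u))
    linear_combination ((-265591872000 : ℂ) + (-399739847040 : ℂ) * u + (36673803648 : ℂ) * u ^ 2 + (10680024960 : ℂ) * u ^ 3 + (-290088345600 : ℂ) * s + (-460678482432 : ℂ) * s * u + ((340762080384 : ℂ)/7) * s * u ^ 2 + ((92148772608 : ℂ)/7) * s * u ^ 3 + (-105088596480 : ℂ) * s ^ 2 + ((-1242070277760 : ℂ)/7) * s ^ 2 * u + ((148050281088 : ℂ)/7) * s ^ 2 * u ^ 2 + ((37744610688 : ℂ)/7) * s ^ 2 * u ^ 3 + (-12619183104 : ℂ) * s ^ 3 + ((-159867323136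 : ℂ)/7) * s ^ 3 * u + ((21138786432 : ℂ)/7) * s ^ 3 * u ^ 2 + ((5138691840 : ℂ)/7) * s ^ 3 * u ^ 3) * ha + (((204747491026538651 : ℂ)/24407490807) + ((10710254722036745 : ℂ)/602654094) * u + ((-8300039932624501 : ℂ)/13947137604) * s + ((1415828793764761279 : ℂ)/97629963228) * s * u + ((-395517915998471075 : ℂ)/97629963228) * s ^ 2 + ((343494442503440117 : ℂ)/97629963228) * s ^ 2 * u + ((-53464977777650197 : ℂ)/48814981614) * s ^ 3 + ((5275730840892091 : ℂ)/24407490807) * s ^ 3 * u + ((-102056829750530 : ℂ)/2711943423) * s ^ 4) * hs2 + (((-643079451740649107 : ℂ)/13947137604) + ((102307399676527807 : ℂ)/13947137604) * u + ((2244764462489285 : ℂ)/1549681956) * u ^ 2 + ((-3489304447634189689 : ℂ)/97629963228) * s + ((658076722852855667 : ℂ)/97629963228) * s * u + ((6714529083937079 : ℂ)/5423886846) * s * u ^ 2 + ((-5020493849523959 : ℂ)/4649045868) * s ^ 2 + ((15137756225061107 : ℂ)/32543321076) * s ^ 2 * u + ((204273679467643 : ℂ)/3615924564) * s ^ 2 *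 u ^ 2 + ((472753791672422251 : ℂ)/97629963228) * s ^ 3 + ((-94011037689397349 : ℂ)/97629963228) * s ^ 3 * u + ((-959217354904397 : ℂ)/5423886846) * s ^ 3 * u ^ 2 + ((53464977777650197 : ℂ)/48814981614) * s ^ 4 + ((-5275730840892091 : ℂ)/24407490807) * s ^ 4 * u + ((-102056829750530 : ℂ)/2711943423) * s ^ 4 * u ^ 2 + ((102056829750530 : ℂ)/2711943423) * s ^ 5) * hu
  · apply MvPolynomial.funext
    intro x
    simp only [substMat, MvPolynomial.algebraMap_eq, map_one, map_add, map_mul, map_pow, map_ofNat, MvPolynomial.aeval_X,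
      MvPolynomial.aeval_C, MvPolynomial.eval_add, MvPolynomial.eval_mul, MvPolynomial.eval_pow,
      MvPolynomial.eval_C, MvPolynomial.eval_X, MvPolynomial.eval_ofNat, map_sub,
      Matrix.of_apply, Matrix.cons_val', Matrix.cons_val_zero, Matrix.cons_val_one,
      Matrix.head_cons, Matrix.head_fin_const, Matrix.cons_val_fin_one, Matrix.empty_val']
    rw [hsq]
    linear_combination x 0 ^ 6 * hk0 + x 0 ^ 5 * x 1 * hk1 + x 0 ^ 4 * x 1 ^ 2 * hk2 + x 0 ^ 3 * x 1 ^ 3 * hk3 + x 0 ^ 2 * x 1 ^ 4 * hk4 + x 0 * x 1 ^ 5 * hk5 + x 1 ^ 6 * hk6
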